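/- For every natural number k with 1 ≤ k ≤ n, the alternating sum ∑_{i=0}^{k} (-1)^i h_i(x_1,...,x_{n-i+1}) e_{k-i}(x_1,...,x_{n-i}) equals 0 in the polynomial ring in n variables. -/
import Mathlib

open MvPolynomial Finset

/-- Elementary symmetric polynomial of degree `k` in the first `m` variables `x_1,…,x_m`
(0-indexed: the variables `X i` with `(i : ℕ) < m`), viewed in the polynomial ring in
`n` variables. It is `1` for `k = 0` and `0` for `k > m`. -/
noncomputable def esymb (R : Type) [CommRing R] (n m k : ℕ) : MvPolynomial (Fin n) R :=
  ∑ S ∈ (Finset.univ.filter (fun i : Fin n => (i : ℕ) < m)).powersetCard k, ∏ i ∈ S, X i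

/-- Complete homogeneous symmetric polynomial of degree `k` in the first `m` variables
`x_1,…,x_m` (0-indexed: the variables `X i` with `(i : ℕ) < m`), viewed in the polynomial
ring in `n` variables. It is `1` for `k = 0` and, for `k > 0`, it is `0` when `m = 0`. -/
noncomputable def hsymb (R : Type) [CommRing R] (n m k : ℕ) : MvPolynomial (Fin n) R :=
  ∑ μ ∈ (Finset.univ.filter (fun i : Fin n => (i : ℕ) < m)).sym k,
    ((μ : Multiset (Fin n)).map X).prod

variable (R : Type) [CommRing R] (n : ℕ)

lemma filter_succ {m : ℕ} (h : m < n) :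
    (Finset.univ.filter (fun i : Fin n => (i : ℕ) < m + 1)) =
      insert ⟨m, h⟩ (Finset.univ.filter (fun i : Fin n => (i : ℕ) < m)) := by
  ext a
  simp only [mem_filter, mem_univ, true_and, mem_insert, Fin.ext_iff]
  omega

lemma esymb_zero (m : ℕ) : esymb R n m 0 = 1 := by
  simp [esymb]

lemma hsymb_zero (m : ℕ) : hsymb R n m 0 = 1 := by
  rw [hsymb, Finset.sym_zero, Finset.sum_singleton]
  rfl

lemma esymb_eq_zero {m k : ℕ} (h : m < k) : esymb R n m k = 0 := by
  have hcard : (Finset.univ.filter (fun i : Fin n => (i : ℕ) < m)).card < k := by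
    refine lt_of_le_of_lt ?_ h
    have := Finset.card_le_card_of_injOn (f := fun i : Fin n => (i : ℕ))
      (s := Finset.univ.filter (fun i : Fin n => (i : ℕ) < m)) (t := Finset.range m)
      (fun a ha => by simp at ha ⊢; exact ha)
      (fun a _ b _ hab => Fin.ext hab)
    simpa using this
  rw [esymb, Finset.powersetCard_eq_empty.mpr hcard, Finset.sum_empty]

lemma hsymb_eq_zero {k : ℕ} (h : 1 ≤ k) : hsymb R n 0 k = 0 := by
  obtain ⟨k, rfl⟩ := Nat.exists_eq_add_of_le h
  rw [Nat.add_comm]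
  have : (Finset.univ.filter (fun i : Fin n => (i : ℕ) < 0)) = (∅ : Finset (Fin n)) := by
    simp
  rw [hsymb, this, Finset.sym_empty, Finset.sum_empty]

lemma esymb_succ {m : ℕ} (h : m < n) (k : ℕ) :
    esymb R n (m+1) (k+1) = esymb R n m (k+1) + X ⟨m, h⟩ * esymb R n m k := by
  classical
  have hx : (⟨m, h⟩ : Fin n) ∉ (Finset.univ.filter (fun i : Fin n => (i : ℕ) < m)) := by
    simp
  rw [esymb, filter_succ n h, Finset.powersetCard_succ_insert hx,
    Finset.sum_union, Finset.sum_image]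
  · rw [esymb, esymb, Finset.mul_sum]
    congr 1
    refine Finset.sum_congr rfl fun S hS => ?_
    rw [Finset.prod_insert]
    exact fun hxS => hx ((Finset.mem_powersetCard.mp hS).1 hxS)
  · intro S hS T hT hST
    have hxS : (⟨m, h⟩ : Fin n) ∉ S := fun hc => hx ((Finset.mem_powersetCard.mp hS).1 hc)
    have hxT : (⟨m, h⟩ : Fin n) ∉ T := fun hc => hx ((Finset.mem_powersetCard.mp hT).1 hc)
    rw [← Finset.erase_insert hxS, ← Finset.erase_insert hxT, hST]
  · rw [Finset.disjoint_right]
    intro S hS hS'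
    obtain ⟨T, hT, rfl⟩ := Finset.mem_image.mp hS
    exact hx ((Finset.mem_powersetCard.mp hS').1 (Finset.mem_insert_self _ _))

lemma hsymb_succ {m : ℕ} (h : m < n) (k : ℕ) :
    hsymb R n (m+1) (k+1) = hsymb R n m (k+1) + X ⟨m, h⟩ * hsymb R n (m+1) k := by
  classical
  set x : Fin n := ⟨m, h⟩ with hxdef
  rw [hsymb, ← Finset.sum_filter_add_sum_filter_not _ (fun μ => x ∈ μ), add_comm]
  congr 1
  · -- those not containing x
    rw [hsymb]
    refine Finset.sum_congr ?_ (fun _ _ => rfl)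
    ext μ
    simp only [Finset.mem_filter, Finset.mem_sym_iff, Finset.mem_univ, true_and]
    constructor
    · rintro ⟨h1, h2⟩ a ha
      have h3 := h1 a ha
      have h4 : (a : ℕ) ≠ m := fun hc => h2 (by rwa [show a = x from Fin.ext hc] at ha)
      omega
    · intro h1
      refine ⟨fun a ha => by have := h1 a ha; omega, fun hc => absurd (h1 x hc) (by simp [hxdef])⟩
  · -- those containing x
    rw [hsymb, Finset.mul_sum]
    refine Finset.sum_bij' (fun μ hμ => μ.erase x (Finset.mem_filter.mp hμ).2)
      (fun ν _ => x ::ₛ ν) ?_ ?_ ?_ ?_ ?_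
    · intro μ hμ
      rw [Finset.mem_sym_iff]
      intro a ha
      exact (Finset.mem_sym_iff.mp (Finset.mem_filter.mp hμ).1) a
        (by rw [← Sym.cons_erase (Finset.mem_filter.mp hμ).2]; exact Sym.mem_cons_of_mem ha)
    · intro ν hν
      rw [Finset.mem_filter]
      refine ⟨Finset.mem_sym_iff.mpr fun a ha => ?_, Sym.mem_cons_self _ _⟩
      rcases Sym.mem_cons.mp ha with rfl | ha
      · simp [hxdef]
      · exact Finset.mem_sym_iff.mp hν a ha
    · intro μ hμ
      exact Sym.cons_erase _
    · intro ν hν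
      exact Sym.erase_cons_head _ _ _
    · intro μ hμ
      conv_lhs => rw [← Sym.cons_erase (Finset.mem_filter.mp hμ).2]
      rw [Sym.coe_cons, Multiset.map_cons, Multiset.prod_cons]

lemma step_zero {m kk : ℕ} (h : m < n) :
    (-1 : MvPolynomial (Fin n) R)^0 * hsymb R n (m+2) 0 * esymb R n (m+1) (kk+1)
      - (-1)^0 * hsymb R n (m+1) 0 * esymb R n m (kk+1)
    = (-1)^0 * X ⟨m, h⟩ * (hsymb R n (m+1) 0 * esymb R n m kk) - 0 := by
  rw [hsymb_zero, hsymb_zero, esymb_succ R n h kk]; ring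

lemma step_mid {a : ℕ} (b j : ℕ) (h2 : a + 1 < n) :
    (-1 : MvPolynomial (Fin n) R)^(j+1) * hsymb R n (a+2) (j+1) * esymb R n (a+1) (b+1)
      - (-1)^(j+1) * hsymb R n (a+1) (j+1) * esymb R n a (b+1)
    = (-1)^(j+1) * X ⟨a, by omega⟩ * (hsymb R n (a+1) (j+1) * esymb R n a b)
      - (-1)^j * X ⟨a+1, h2⟩ * (hsymb R n (a+2) j * esymb R n (a+1) (b+1)) := by
  rw [hsymb_succ R n h2 j, esymb_succ R n (by omega : a < n) b]; ring

lemma step_last {c kk : ℕ} (h : c < n) :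
    (-1 : MvPolynomial (Fin n) R)^(kk+1) * hsymb R n (c+1) (kk+1) * esymb R n c 0
      - (-1)^(kk+1) * hsymb R n c (kk+1) * esymb R n (c-1) 0
    = -((-1)^kk * X ⟨c, h⟩ * (hsymb R n (c+1) kk * esymb R n (c-c) 0)) := by
  rw [esymb_zero, esymb_zero, esymb_zero, hsymb_succ R n h kk]; ring

lemma step (k m : ℕ) (hk : 1 ≤ k) (hkm : k ≤ m + 1) (hmn : m + 1 ≤ n) :
    (∑ i ∈ Finset.range (k+1), (-1 : MvPolynomial (Fin n) R)^i *
        hsymb R n (m+1+1-i) i * esymb R n (m+1-i) (k-i))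
    = ∑ i ∈ Finset.range (k+1), (-1 : MvPolynomial (Fin n) R)^i *
        hsymb R n (m+1-i) i * esymb R n (m-i) (k-i) := by
  obtain ⟨kk, rfl⟩ : ∃ kk, k = kk + 1 := ⟨k-1, by omega⟩
  rw [← sub_eq_zero, ← Finset.sum_sub_distrib]
  set g : ℕ → MvPolynomial (Fin n) R := fun i =>
    (-1)^i * X (⟨m - i, by omega⟩ : Fin n) *
      (hsymb R n (m+1-i) i * esymb R n (m-i) (kk-i)) with hg
  set G : ℕ → MvPolynomial (Fin n) R := fun j => Nat.casesOn j 0 (fun j' => g j') with hGdef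
  rw [Finset.sum_range_succ]
  have hmid : ∀ i ∈ Finset.range (kk+1),
      ((-1 : MvPolynomial (Fin n) R)^i * hsymb R n (m+1+1-i) i * esymb R n (m+1-i) (kk+1-i)
        - (-1)^i * hsymb R n (m+1-i) i * esymb R n (m-i) (kk+1-i)) = G (i+1) - G i := by
    intro i hi
    have hik : i ≤ kk := by simpa [Nat.lt_succ_iff] using hi
    have him : i ≤ m := by omega
    match i with
    | 0 =>
      show _ = g 0 - 0
      simp only [hg, pow_zero, one_mul, Nat.sub_zero, sub_zero, hsymb_zero,
        show m+1+1 = m+2 from by omega]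
      rw [esymb_succ R n (show m < n by omega) kk]
      ring
    | (j+1) =>
      show _ = g (j+1) - g j
      obtain ⟨a, ha⟩ : ∃ a, m = a + (j+1) := ⟨m - (j+1), by omega⟩
      obtain ⟨b, hb⟩ : ∃ b, kk = b + (j+1) := ⟨kk - (j+1), by omega⟩
      subst ha hb
      have e1 : a + (j+1) + 1 + 1 - (j+1) = a + 2 := by omega
      have e2 : a + (j+1) + 1 - (j+1) = a + 1 := by omega
      have e3 : a + (j+1) - (j+1) = a := by omega
      have e4 : b + (j+1) + 1 - (j+1) = b + 1 := by omega
      have e5 : b + (j+1) - (j+1) = b := by omega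
      have e6 : a + (j+1) - j = a + 1 := by omega
      have e7 : a + (j+1) + 1 - j = a + 2 := by omega
      have e8 : b + (j+1) - j = b + 1 := by omega
      rw [hg]
      simp only [e1, e2, e3, e4, e5, e6, e7, e8]
      exact step_mid R n b j (by omega)
  rw [Finset.sum_congr rfl hmid, Finset.sum_range_sub (f := G)]
  have hGtop : G (kk+1) = g kk := rfl
  have hG0 : G 0 = 0 := rfl
  rw [hGtop, hG0, sub_zero]
  -- last term
  have e1 : m + 1 + 1 - (kk+1) = (m - kk) + 1 := by omega
  have e2 : m + 1 - (kk+1) = m - kk := by omega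
  have e3 : kk + 1 - (kk+1) = 0 := by omega
  have e5 : m + 1 - kk = (m - kk) + 1 := by omega
  rw [hg]
  simp only [e1, e2, e3, e5, Nat.sub_self, esymb_zero, mul_one]
  rw [hsymb_succ R n (show m - kk < n by omega) kk]
  ring

lemma key (k : ℕ) (hk : 1 ≤ k) : ∀ m, m ≤ n → k ≤ m + 1 →
    ∑ i ∈ Finset.range (k+1), (-1 : MvPolynomial (Fin n) R)^i *
      hsymb R n (m+1-i) i * esymb R n (m-i) (k-i) = 0 := by
  intro m
  induction m with
  | zero =>
    intro _ hk1
    have : k = 1 := by omega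
    subst this
    rw [Finset.sum_range_succ, Finset.sum_range_one]
    rw [esymb_eq_zero R n (show 0 - 0 < 1 - 0 by omega)]
    rw [show 0 + 1 - 1 = 0 from rfl, hsymb_eq_zero R n le_rfl]
    ring
  | succ m ih =>
    intro hmn hkm
    by_cases h : k ≤ m + 1
    · rw [step R n k m hk h hmn]
      exact ih (by omega) h
    · have hkm2 : k = m + 2 := by omega
      apply Finset.sum_eq_zero
      intro i hi
      have hik : i ≤ k := by simpa [Nat.lt_succ_iff] using hi
      rcases eq_or_lt_of_le hik with rfl | hilt
      · rw [show m + 1 + 1 - i = 0 by omega, hsymb_eq_zero R n hk, mul_zero, zero_mul]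
      · rw [esymb_eq_zero R n (show m + 1 - i < k - i by omega), mul_zero]

/-- ∑_{i=0}^{k} (-1)^i h_i(x_1,…,x_{n-i+1}) e_{k-i}(x_1,…,x_{n-i}) = 0 for 1 ≤ k ≤ n. -/
theorem stmt13 (R : Type) [CommRing R] (n k : ℕ) (hk : 1 ≤ k) (hkn : k ≤ n) :
    ∑ i ∈ Finset.range (k + 1), (-1 : MvPolynomial (Fin n) R) ^ i *
        hsymb R n (n + 1 - i) i * esymb R n (n - i) (k - i) = 0 := by
  exact key R n k hk n le_rfl (by omega)
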